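/- Let H be a bialgebra over a field k. The set of twisted derivations of H is a Lie algebra under the bracket [(d,φ),(d',φ')] = ([d,d'], (d⊗I + I⊗d)(φ') − (d'⊗I + I⊗d')(φ) − [φ,φ']): if (d,φ) and (d',φ') are twisted derivations of H then so is their bracket, and this bracket is bilinear, alternating, and satisfies the Jacobi identity. -/

import Mathlib

open scoped TensorProduct

noncomputable section

variable (K H : Type*) [Field K] [Ring H] [Bialgebra K H]

/-- The comultiplication of the bialgebra `H`. -/
def cm : H →ₗ[K] H ⊗[K] H := Coalgebra.comul

/-- The counit of the bialgebra `H`. -/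
def cu : H →ₗ[K] K := Coalgebra.counit

/-- A twisted derivation of the bialgebra `H` is a pair `(d, φ)` where `d` is a
`K`-algebra derivation of `H` and `φ ∈ H ⊗ H`, such that
`(d⊗I + I⊗d)(Δ(x)) − Δ(d(x)) = [φ, Δ(x)]` for all `x`,
`1⊗φ + (I⊗Δ)(φ) = φ⊗1 + (Δ⊗I)(φ)` (co-Hochschild 2-cocycle condition), and
`ε∘d = 0`, `(ε⊗I)(φ) = 0 = (I⊗ε)(φ)`. -/
structure IsTwistedDerivation (d : H →ₗ[K] H) (φ : H ⊗[K] H) : Prop where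
  leibniz : ∀ x y : H, d (x * y) = d x * y + x * d y
  conj : ∀ x : H,
    (LinearMap.rTensor H d + LinearMap.lTensor H d) (cm K H x) - cm K H (d x)
      = φ * cm K H x - cm K H x * φ
  cocycle : (1 : H) ⊗ₜ[K] φ + LinearMap.lTensor H (cm K H) φ
      = TensorProduct.assoc K H H H (φ ⊗ₜ[K] (1 : H) + LinearMap.rTensor H (cm K H) φ)
  counit_comp : ∀ x : H, cu K H (d x) = 0
  counit_left : TensorProduct.lid K H (LinearMap.rTensor H (cu K H) φ) = 0
  counit_right : TensorProduct.rid K H (LinearMap.lTensor H (cu K H) φ) = 0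

/-- The inner derivation `[a, −] : x ↦ ax − xa`. -/
def innerDer (a : H) : H →ₗ[K] H := LinearMap.mulLeft K a - LinearMap.mulRight K a

/-- The coboundary twist `a⊗1 + 1⊗a − Δ(a)`. -/
def bdryTwist (a : H) : H ⊗[K] H := a ⊗ₜ[K] (1 : H) + (1 : H) ⊗ₜ[K] a - cm K H a


/-- The bracket `[(d,φ),(d',φ')] = ([d,d'], (d⊗I + I⊗d)(φ') − (d'⊗I + I⊗d')(φ) − [φ,φ'])`
on pairs of a linear endomorphism of `H` and an element of `H ⊗ H`. -/
def twBracket (p q : (H →ₗ[K] H) × (H ⊗[K] H)) : (H →ₗ[K] H) × (H ⊗[K] H) :=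
  (p.1 ∘ₗ q.1 - q.1 ∘ₗ p.1,
    (LinearMap.rTensor H p.1 + LinearMap.lTensor H p.1) q.2
      - (LinearMap.rTensor H q.1 + LinearMap.lTensor H q.1) p.2
      - (p.2 * q.2 - q.2 * p.2))

/-!
The derivation `D_d = d ⊗ I + I ⊗ d` of `H ⊗ H` satisfies `D_{[d,d']} = [D_d, D_{d'}]`, which gives
the Jacobi identity and the compatibility of the bracket with `Δ`. For the cocycle condition,
the compatibility of `(d, φ)` with `Δ` makes the co-Hochschild differential `δ` intertwine `D_d`
with its three-fold analogue up to the commutators `[1 ⊗ φ, (I ⊗ Δ) ψ]` and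
`[φ ⊗ 1, (Δ ⊗ I) ψ]`. Since `δ φ = δ φ' = 0`, the correction terms of
`δ (D_d φ' - D_{d'} φ - [φ, φ'])` add up to
`[φ ⊗ 1 + (Δ ⊗ I) φ, φ' ⊗ 1 + (Δ ⊗ I) φ'] - [1 ⊗ φ + (I ⊗ Δ) φ, 1 ⊗ φ' + (I ⊗ Δ) φ']`,
which vanishes because both cocycle identities equate the two sides.
-/

open LinearMap

section TensorDerivation

variable {R M : Type*} [CommRing R] [AddCommGroup M] [Module R M]

def derTensor (d : M →ₗ[R] M) : M ⊗[R] M →ₗ[R] M ⊗[R] M := rTensor M d + lTensor M d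

def derTensor₃ (d : M →ₗ[R] M) : M ⊗[R] (M ⊗[R] M) →ₗ[R] M ⊗[R] (M ⊗[R] M) :=
  rTensor (M ⊗[R] M) d + lTensor M (derTensor d)

def derTensor₃' (d : M →ₗ[R] M) : (M ⊗[R] M) ⊗[R] M →ₗ[R] (M ⊗[R] M) ⊗[R] M :=
  rTensor M (derTensor d) + lTensor (M ⊗[R] M) d

lemma rTensor_add_lTensor (d : M →ₗ[R] M) : rTensor M d + lTensor M d = derTensor d := rfl

@[simp]
lemma derTensor_tmul (d : M →ₗ[R] M) (a b : M) :
    derTensor d (a ⊗ₜ b) = d a ⊗ₜ b + a ⊗ₜ d b := rfl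

lemma derTensor_comp_sub_comp (f g : M →ₗ[R] M) :
    derTensor (f ∘ₗ g - g ∘ₗ f)
      = derTensor f ∘ₗ derTensor g - derTensor g ∘ₗ derTensor f := by
  refine TensorProduct.ext' fun a b => ?_
  simp only [LinearMap.sub_apply, comp_apply, derTensor_tmul, map_add, TensorProduct.sub_tmul,
    TensorProduct.tmul_sub]
  abel

lemma assoc_derTensor₃' (d : M →ₗ[R] M) (z : (M ⊗[R] M) ⊗[R] M) :
    TensorProduct.assoc R M M M (derTensor₃' d z)
      = derTensor₃ d (TensorProduct.assoc R M M M z) := by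
  have h : (TensorProduct.assoc R M M M).toLinearMap ∘ₗ derTensor₃' d
      = derTensor₃ d ∘ₗ (TensorProduct.assoc R M M M).toLinearMap :=
    TensorProduct.ext_threefold fun a b c => by
      simp [derTensor₃, derTensor₃', TensorProduct.add_tmul, TensorProduct.tmul_add]
      abel
  exact congr($h z)

lemma lid_rTensor_derTensor {d : M →ₗ[R] M} {e : M →ₗ[R] R} (he : ∀ x, e (d x) = 0)
    (u : M ⊗[R] M) :
    TensorProduct.lid R M (rTensor M e (derTensor d u))
      = d (TensorProduct.lid R M (rTensor M e u)) := by
  have h : (TensorProduct.lid R M).toLinearMap ∘ₗ rTensor M e ∘ₗ derTensor d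
      = d ∘ₗ (TensorProduct.lid R M).toLinearMap ∘ₗ rTensor M e :=
    TensorProduct.ext' fun a b => by simp [he]
  exact congr($h u)

lemma rid_lTensor_derTensor {d : M →ₗ[R] M} {e : M →ₗ[R] R} (he : ∀ x, e (d x) = 0)
    (u : M ⊗[R] M) :
    TensorProduct.rid R M (lTensor M e (derTensor d u))
      = d (TensorProduct.rid R M (lTensor M e u)) := by
  have h : (TensorProduct.rid R M).toLinearMap ∘ₗ lTensor M e ∘ₗ derTensor d
      = d ∘ₗ (TensorProduct.rid R M).toLinearMap ∘ₗ lTensor M e :=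
    TensorProduct.ext' fun a b => by simp [he]
  exact congr($h u)

variable {A : Type*} [Ring A] [Algebra R A]

lemma map_one_eq_zero_of_leibniz {d : A →ₗ[R] A} (hd : ∀ x y, d (x * y) = d x * y + x * d y) :
    d 1 = 0 := by
  simpa using hd 1 1

lemma derTensor_mul {d : A →ₗ[R] A} (hd : ∀ x y, d (x * y) = d x * y + x * d y)
    (u v : A ⊗[R] A) : derTensor d (u * v) = derTensor d u * v + u * derTensor d v := by
  induction u using TensorProduct.induction_on with
  | zero => simp
  | add u₁ u₂ h₁ h₂ => simp only [add_mul, map_add, h₁, h₂]; abel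
  | tmul a b =>
    induction v using TensorProduct.induction_on with
    | zero => simp
    | add v₁ v₂ h₁ h₂ => simp only [mul_add, map_add, h₁, h₂]; abel
    | tmul c e =>
      simp only [Algebra.TensorProduct.tmul_mul_tmul, derTensor_tmul, hd, add_mul, mul_add,
        TensorProduct.add_tmul, TensorProduct.tmul_add]
      abel

lemma one_tmul_derTensor {d : A →ₗ[R] A} (hd : d 1 = 0) (u : A ⊗[R] A) :
    (1 : A) ⊗ₜ derTensor d u = derTensor₃ d (1 ⊗ₜ u) := by
  simp [derTensor₃, hd]

lemma derTensor_tmul_one {d : A →ₗ[R] A} (hd : d 1 = 0) (u : A ⊗[R] A) :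
    derTensor d u ⊗ₜ (1 : A) = derTensor₃' d (u ⊗ₜ 1) := by
  simp [derTensor₃', hd]

end TensorDerivation

section TensorMul

variable {R A B C : Type*} [CommSemiring R] [Semiring A] [Algebra R A] [Semiring B] [Algebra R B]
  [Semiring C] [Algebra R C]

lemma lTensor_mulLeft (b : B) : lTensor A (mulLeft R b) = mulLeft R ((1 : A) ⊗ₜ b) := by
  ext; simp

lemma lTensor_mulRight (b : B) : lTensor A (mulRight R b) = mulRight R ((1 : A) ⊗ₜ b) := by
  ext; simp

lemma rTensor_mulLeft (a : A) : rTensor B (mulLeft R a) = mulLeft R (a ⊗ₜ (1 : B)) := by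
  ext; simp

lemma rTensor_mulRight (a : A) : rTensor B (mulRight R a) = mulRight R (a ⊗ₜ (1 : B)) := by
  ext; simp

lemma lTensor_algHom_mul (f : B →ₐ[R] C) (u v : A ⊗[R] B) :
    lTensor A f.toLinearMap (u * v) = lTensor A f.toLinearMap u * lTensor A f.toLinearMap v :=
  map_mul (Algebra.TensorProduct.lTensor A f) u v

lemma rTensor_algHom_mul (f : A →ₐ[R] C) (u v : A ⊗[R] B) :
    rTensor B f.toLinearMap (u * v) = rTensor B f.toLinearMap u * rTensor B f.toLinearMap v :=
  map_mul (Algebra.TensorProduct.rTensor B f) u v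

lemma lid_rTensor_algHom_mul (f : A →ₐ[R] R) (u v : A ⊗[R] B) :
    TensorProduct.lid R B (rTensor B f.toLinearMap (u * v))
      = TensorProduct.lid R B (rTensor B f.toLinearMap u)
        * TensorProduct.lid R B (rTensor B f.toLinearMap v) := by
  rw [rTensor_algHom_mul]
  exact map_mul (Algebra.TensorProduct.lid R B) _ _

lemma rid_lTensor_algHom_mul (f : B →ₐ[R] R) (u v : A ⊗[R] B) :
    TensorProduct.rid R A (lTensor A f.toLinearMap (u * v))
      = TensorProduct.rid R A (lTensor A f.toLinearMap u)
        * TensorProduct.rid R A (lTensor A f.toLinearMap v) := by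
  rw [lTensor_algHom_mul]
  exact map_mul (Algebra.TensorProduct.rid R R A) _ _

lemma assoc_mul (u v : (A ⊗[R] B) ⊗[R] C) :
    TensorProduct.assoc R A B C (u * v)
      = TensorProduct.assoc R A B C u * TensorProduct.assoc R A B C v :=
  map_mul (Algebra.TensorProduct.assoc R R R A B C) u v

end TensorMul

section CoHochschild

/-- The co-Hochschild differential `ψ ↦ 1 ⊗ ψ + (I ⊗ Δ) ψ - ψ ⊗ 1 - (Δ ⊗ I) ψ`, read in
`H ⊗ (H ⊗ H)`. -/
def coHochschild : H ⊗[K] H →ₗ[K] H ⊗[K] (H ⊗[K] H) :=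
  TensorProduct.mk K H (H ⊗[K] H) 1 + lTensor H (cm K H)
    - (TensorProduct.assoc K H H H).toLinearMap
      ∘ₗ ((TensorProduct.mk K (H ⊗[K] H) H).flip 1 + rTensor H (cm K H))

variable {K H}

lemma coHochschild_apply (ψ : H ⊗[K] H) :
    coHochschild K H ψ = (1 : H) ⊗ₜ ψ + lTensor H (cm K H) ψ
      - (TensorProduct.assoc K H H H (ψ ⊗ₜ 1)
        + TensorProduct.assoc K H H H (rTensor H (cm K H) ψ)) := by
  simp [coHochschild]

lemma lTensor_comul_mul (u v : H ⊗[K] H) :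
    lTensor H (cm K H) (u * v) = lTensor H (cm K H) u * lTensor H (cm K H) v :=
  lTensor_algHom_mul (Bialgebra.comulAlgHom K H) u v

lemma rTensor_comul_mul (u v : H ⊗[K] H) :
    rTensor H (cm K H) (u * v) = rTensor H (cm K H) u * rTensor H (cm K H) v :=
  rTensor_algHom_mul (Bialgebra.comulAlgHom K H) u v

lemma coHochschild_eq_zero_iff (ψ : H ⊗[K] H) :
    coHochschild K H ψ = 0 ↔ (1 : H) ⊗ₜ ψ + lTensor H (cm K H) ψ
      = TensorProduct.assoc K H H H (ψ ⊗ₜ 1 + rTensor H (cm K H) ψ) := by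
  rw [coHochschild_apply, sub_eq_zero, map_add]

lemma lid_rTensor_counit_mul (u v : H ⊗[K] H) :
    TensorProduct.lid K H (rTensor H (cu K H) (u * v))
      = TensorProduct.lid K H (rTensor H (cu K H) u)
        * TensorProduct.lid K H (rTensor H (cu K H) v) :=
  lid_rTensor_algHom_mul (Bialgebra.counitAlgHom K H) u v

lemma rid_lTensor_counit_mul (u v : H ⊗[K] H) :
    TensorProduct.rid K H (lTensor H (cu K H) (u * v))
      = TensorProduct.rid K H (lTensor H (cu K H) u)
        * TensorProduct.rid K H (lTensor H (cu K H) v) :=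
  rid_lTensor_algHom_mul (Bialgebra.counitAlgHom K H) u v

lemma coHochschild_mul (u v : H ⊗[K] H) :
    coHochschild K H (u * v)
      = (1 ⊗ₜ u) * (1 ⊗ₜ v) + lTensor H (cm K H) u * lTensor H (cm K H) v
      - (TensorProduct.assoc K H H H (u ⊗ₜ 1) * TensorProduct.assoc K H H H (v ⊗ₜ 1)
        + TensorProduct.assoc K H H H (rTensor H (cm K H) u)
          * TensorProduct.assoc K H H H (rTensor H (cm K H) v)) := by
  rw [coHochschild_apply, ← assoc_mul, ← assoc_mul, Algebra.TensorProduct.tmul_mul_tmul,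
    Algebra.TensorProduct.tmul_mul_tmul, one_mul, lTensor_comul_mul, rTensor_comul_mul]

namespace IsTwistedDerivation

variable {d : H →ₗ[K] H} {φ : H ⊗[K] H}

lemma map_one (h : IsTwistedDerivation K H d φ) : d 1 = 0 :=
  map_one_eq_zero_of_leibniz h.leibniz

lemma comul_map (h : IsTwistedDerivation K H d φ) (x : H) :
    cm K H (d x) = derTensor d (cm K H x) - (φ * cm K H x - cm K H x * φ) := by
  rw [← h.conj x, rTensor_add_lTensor, sub_sub_cancel]

lemma comul_comp (h : IsTwistedDerivation K H d φ) :
    cm K H ∘ₗ d = derTensor d ∘ₗ cm K H - (mulLeft K φ - mulRight K φ) ∘ₗ cm K H := by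
  ext x
  simp [h.comul_map x]

lemma lTensor_comul_derTensor (h : IsTwistedDerivation K H d φ) (ψ : H ⊗[K] H) :
    lTensor H (cm K H) (derTensor d ψ) = derTensor₃ d (lTensor H (cm K H) ψ)
      - ((1 ⊗ₜ φ) * lTensor H (cm K H) ψ - lTensor H (cm K H) ψ * (1 ⊗ₜ φ)) := by
  have key : lTensor H (cm K H) ∘ₗ derTensor d = derTensor₃ d ∘ₗ lTensor H (cm K H)
      - (mulLeft K (1 ⊗ₜ φ) - mulRight K (1 ⊗ₜ φ)) ∘ₗ lTensor H (cm K H) := by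
    rw [derTensor, derTensor₃, comp_add, lTensor_comp_rTensor, ← rTensor_comp_lTensor,
      ← lTensor_comp, h.comul_comp, lTensor_sub, lTensor_comp, lTensor_comp, lTensor_sub,
      lTensor_mulLeft, lTensor_mulRight, add_comp]
    abel
  simpa using congr($key ψ)

lemma rTensor_comul_derTensor (h : IsTwistedDerivation K H d φ) (ψ : H ⊗[K] H) :
    rTensor H (cm K H) (derTensor d ψ) = derTensor₃' d (rTensor H (cm K H) ψ)
      - ((φ ⊗ₜ 1) * rTensor H (cm K H) ψ - rTensor H (cm K H) ψ * (φ ⊗ₜ 1)) := by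
  have key : rTensor H (cm K H) ∘ₗ derTensor d = derTensor₃' d ∘ₗ rTensor H (cm K H)
      - (mulLeft K (φ ⊗ₜ 1) - mulRight K (φ ⊗ₜ 1)) ∘ₗ rTensor H (cm K H) := by
    rw [derTensor, derTensor₃', comp_add, rTensor_comp_lTensor, ← lTensor_comp_rTensor,
      ← rTensor_comp, h.comul_comp, rTensor_sub, rTensor_comp, rTensor_comp, rTensor_sub,
      rTensor_mulLeft, rTensor_mulRight, add_comp]
    abel
  simpa using congr($key ψ)

lemma coHochschild_eq_zero (h : IsTwistedDerivation K H d φ) : coHochschild K H φ = 0 :=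
  (coHochschild_eq_zero_iff φ).2 h.cocycle

lemma coHochschild_derTensor (h : IsTwistedDerivation K H d φ) (ψ : H ⊗[K] H) :
    coHochschild K H (derTensor d ψ) = derTensor₃ d (coHochschild K H ψ)
      - ((1 ⊗ₜ φ) * lTensor H (cm K H) ψ - lTensor H (cm K H) ψ * (1 ⊗ₜ φ))
      + (TensorProduct.assoc K H H H (φ ⊗ₜ 1)
          * TensorProduct.assoc K H H H (rTensor H (cm K H) ψ)
        - TensorProduct.assoc K H H H (rTensor H (cm K H) ψ)
          * TensorProduct.assoc K H H H (φ ⊗ₜ 1)) := by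
  rw [coHochschild_apply, coHochschild_apply, h.lTensor_comul_derTensor,
    h.rTensor_comul_derTensor, one_tmul_derTensor h.map_one, derTensor_tmul_one h.map_one]
  simp only [map_sub, map_add, assoc_derTensor₃', assoc_mul]
  abel

end IsTwistedDerivation

end CoHochschild

section Bracket

variable {K H}

lemma isTwistedDerivation_twBracket {p q : (H →ₗ[K] H) × (H ⊗[K] H)}
    (hp : IsTwistedDerivation K H p.1 p.2) (hq : IsTwistedDerivation K H q.1 q.2) :
    IsTwistedDerivation K H (twBracket K H p q).1 (twBracket K H p q).2 where
  leibniz x y := by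
    simp only [twBracket, LinearMap.sub_apply, comp_apply, hp.leibniz, hq.leibniz, map_add,
      sub_mul, mul_sub]
    abel
  conj x := by
    simp only [twBracket, rTensor_add_lTensor, derTensor_comp_sub_comp, LinearMap.sub_apply,
      comp_apply, map_sub, hp.comul_map, hq.comul_map, derTensor_mul hp.leibniz,
      derTensor_mul hq.leibniz]
    noncomm_ring
  cocycle := by
    refine (coHochschild_eq_zero_iff _).1 ?_
    have hp' := hp.cocycle
    have hq' := hq.cocycle
    rw [map_add] at hp' hq'
    have hpq := congr($hp' * $hq')
    have hqp := congr($hq' * $hp')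
    simp only [twBracket, rTensor_add_lTensor, map_sub, hp.coHochschild_derTensor,
      hq.coHochschild_derTensor, coHochschild_mul, hp.coHochschild_eq_zero,
      hq.coHochschild_eq_zero, map_zero]
    linear_combination (norm := noncomm_ring) hqp - hpq
  counit_comp x := by
    simp only [twBracket, LinearMap.sub_apply, comp_apply, map_sub, hp.counit_comp,
      hq.counit_comp, sub_zero]
  counit_left := by
    simp only [twBracket, rTensor_add_lTensor, map_sub, lid_rTensor_derTensor hp.counit_comp,
      lid_rTensor_derTensor hq.counit_comp, lid_rTensor_counit_mul, hp.counit_left,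
      hq.counit_left, map_zero, mul_zero, sub_self]
  counit_right := by
    simp only [twBracket, rTensor_add_lTensor, map_sub, rid_lTensor_derTensor hp.counit_comp,
      rid_lTensor_derTensor hq.counit_comp, rid_lTensor_counit_mul, hp.counit_right,
      hq.counit_right, map_zero, mul_zero, sub_self]

lemma twBracket_smul_add_left (c : K) (p p' q : (H →ₗ[K] H) × (H ⊗[K] H)) :
    twBracket K H (c • p + p') q = c • twBracket K H p q + twBracket K H p' q := by
  simp only [twBracket, Prod.fst_add, Prod.snd_add, Prod.smul_fst, Prod.smul_snd,
    Prod.smul_mk, Prod.mk_add_mk, Prod.mk.injEq]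
  constructor
  · simp only [add_comp, comp_add, smul_comp, comp_smul, smul_sub]
    abel
  · simp only [rTensor_add, rTensor_smul, lTensor_add, lTensor_smul, LinearMap.add_apply,
      LinearMap.smul_apply, map_add, map_smul, add_mul, mul_add, smul_mul_assoc, mul_smul_comm,
      smul_sub, smul_add]
    abel

lemma twBracket_skew (p q : (H →ₗ[K] H) × (H ⊗[K] H)) :
    twBracket K H p q = -twBracket K H q p := by
  simp only [twBracket, Prod.neg_mk, neg_sub]
  congr 1
  abel

lemma twBracket_smul_add_right (c : K) (p q q' : (H →ₗ[K] H) × (H ⊗[K] H)) :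
    twBracket K H p (c • q + q') = c • twBracket K H p q + twBracket K H p q' := by
  rw [twBracket_skew, twBracket_smul_add_left, twBracket_skew p, twBracket_skew p q', neg_add,
    smul_neg]

lemma twBracket_self (p : (H →ₗ[K] H) × (H ⊗[K] H)) : twBracket K H p p = 0 := by
  simp [twBracket]

lemma twBracket_jacobi {p q r : (H →ₗ[K] H) × (H ⊗[K] H)}
    (hp : ∀ x y, p.1 (x * y) = p.1 x * y + x * p.1 y)
    (hq : ∀ x y, q.1 (x * y) = q.1 x * y + x * q.1 y)
    (hr : ∀ x y, r.1 (x * y) = r.1 x * y + x * r.1 y) :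
    twBracket K H p (twBracket K H q r) + twBracket K H q (twBracket K H r p)
      + twBracket K H r (twBracket K H p q) = 0 := by
  simp only [twBracket, Prod.mk_add_mk, Prod.mk_eq_zero]
  constructor
  · simp only [comp_sub, sub_comp, comp_assoc]
    abel
  · simp only [rTensor_add_lTensor, derTensor_comp_sub_comp, LinearMap.sub_apply, comp_apply,
      map_sub, derTensor_mul hp, derTensor_mul hq, derTensor_mul hr]
    noncomm_ring

end Bracket

theorem twistedDerivations_lieAlgebra :
    (∀ p q : (H →ₗ[K] H) × (H ⊗[K] H), IsTwistedDerivation K H p.1 p.2 →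
      IsTwistedDerivation K H q.1 q.2 →
      IsTwistedDerivation K H (twBracket K H p q).1 (twBracket K H p q).2) ∧
    (∀ (c : K) (p p' q : (H →ₗ[K] H) × (H ⊗[K] H)),
      twBracket K H (c • p + p') q = c • twBracket K H p q + twBracket K H p' q) ∧
    (∀ (c : K) (p q q' : (H →ₗ[K] H) × (H ⊗[K] H)),
      twBracket K H p (c • q + q') = c • twBracket K H p q + twBracket K H p q') ∧
    (∀ p : (H →ₗ[K] H) × (H ⊗[K] H), twBracket K H p p = 0) ∧
    (∀ p q r : (H →ₗ[K] H) × (H ⊗[K] H), IsTwistedDerivation K H p.1 p.2 →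
      IsTwistedDerivation K H q.1 q.2 → IsTwistedDerivation K H r.1 r.2 →
      twBracket K H p (twBracket K H q r) + twBracket K H q (twBracket K H r p)
        + twBracket K H r (twBracket K H p q) = 0) :=
  ⟨fun _ _ hp hq => isTwistedDerivation_twBracket hp hq, twBracket_smul_add_left,
    twBracket_smul_add_right, twBracket_self,
    fun _ _ _ hp hq hr => twBracket_jacobi hp.leibniz hq.leibniz hr.leibniz⟩

end
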